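/- arXiv:1312.1709 — 2 statements merged into one kernel-verified Lean document; each statement's English description precedes it below -/
import Mathlib

section
/- (Eckmann–Hilton for Mal'cev operations) Let S be a set and let s and t be two ternary operations on S, each satisfying the Mal'cev identities (s(x, x, y) = y, s(x, y, y) = x, and the same for t), and suppose they satisfy the interchange law s(t(a, b, c), t(d, e, f), t(g, h, i)) = t(s(a, d, g), s(b, e, h), s(c, f, i)) for all a, b, c, d, e, f, g, h, i ∈ S. Then s = t and this common operation is commutative: t(x, r, y) = t(y, r, x) for all x, r, y ∈ S. -/
/-- Eckmann–Hilton for Mal'cev operations: two Mal'cev operations satisfying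
the interchange law coincide and are commutative. -/
theorem eckmann_hilton_malcev (S : Type*) (s t : S → S → S → S)
    (hs1 : ∀ x y : S, s x x y = y)
    (hs2 : ∀ x y : S, s x y y = x)
    (ht1 : ∀ x y : S, t x x y = y)
    (ht2 : ∀ x y : S, t x y y = x)
    (hint : ∀ a b c d e f g h i : S,
      s (t a b c) (t d e f) (t g h i) = t (s a d g) (s b e h) (s c f i)) :
    s = t ∧ ∀ x r y : S, t x r y = t y r x := by
  have hst : ∀ x r y : S, s x r y = t x r y := by
    intro x r y
    have := hint x r r r r r r r y
    simpa [hs1, hs2, ht1, ht2] using this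
  refine ⟨funext fun x => funext fun r => funext fun y => hst x r y, fun x r y => ?_⟩
  have := hint r r x r r r y r r
  simp [hs1, hs2, ht1, ht2] at this
  rw [← hst x r y, this]
end

section
/- Let S be a set with a ternary operation t satisfying the Mal'cev identities t(x, x, y) = y and t(x, y, y) = x, and suppose t satisfies the interchange law with itself: t(t(a, b, c), t(d, e, f), t(g, h, i)) = t(t(a, d, g), t(b, e, h), t(c, f, i)) for all a, ..., i ∈ S. Then t is commutative (t(x, r, y) = t(y, r, x)) and associative (t(x, r, t(y, s, z)) = t(t(x, r, y), s, z)), i.e., (S, t) is an abelian heap. -/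
/-- A Mal'cev operation satisfying the interchange law with itself is
commutative and associative, i.e. gives an abelian heap. -/
theorem malcev_self_interchange_abelian_heap (S : Type*) (t : S → S → S → S)
    (h1 : ∀ x y : S, t x x y = y)
    (h2 : ∀ x y : S, t x y y = x)
    (hint : ∀ a b c d e f g h i : S,
      t (t a b c) (t d e f) (t g h i) = t (t a d g) (t b e h) (t c f i)) :
    (∀ x r y : S, t x r y = t y r x) ∧
    (∀ x r y s z : S, t x r (t y s z) = t (t x r y) s z) := by
  constructor
  · intro x r y
    have := hint y y x r y y r r y
    simpa [h1, h2] using this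
  · intro x r y s z
    have := hint x r r r r r y s z
    simpa [h1, h2] using this
end
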